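/- arXiv:2310.09280 — 2 statements merged into one kernel-verified Lean document; each statement's English description precedes it below -/
import Mathlib

section
/- For the metric D(x,y) = ∫₀^π d_I(⟨x,u_θ⟩, ⟨y,u_θ⟩) dθ on the open unit disk: if x, y, z ∈ D² and y lies on the Euclidean segment [x,z], then D(x,z) = D(x,y) + D(y,z). -/
open Real MeasureTheory Set

/-- f(t) = t/(1-|t|) -/
noncomputable def f (t : ℝ) : ℝ := t / (1 - |t|)

/-- d_I(s,t) = |f(s) - f(t)| -/
noncomputable def dI (s t : ℝ) : ℝ := |f s - f t|

/-- the unit direction u_θ = (cos θ, sin θ) -/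
noncomputable def u (θ : ℝ) : EuclideanSpace ℝ (Fin 2) := WithLp.toLp 2 ![Real.cos θ, Real.sin θ]

/-- D(x,y) = ∫₀^π d_I(⟨x,u_θ⟩, ⟨y,u_θ⟩) dθ -/
noncomputable def Dmet (x y : EuclideanSpace ℝ (Fin 2)) : ℝ :=
  ∫ θ in (0:ℝ)..π, dI (inner ℝ x (u θ) : ℝ) (inner ℝ y (u θ) : ℝ)

/-!
Each projection `x ↦ ⟨x, u_θ⟩` maps the segment `[x, z]` into the interval between the
projections of its endpoints, and `f` is monotone on `(-1, 1)`, so `f ⟨y, u_θ⟩` lies between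
`f ⟨x, u_θ⟩` and `f ⟨z, u_θ⟩`. Hence the triangle inequality for `d_I` is an equality for every
`θ`, and integrating over `θ` gives the additivity of `D`.
-/

lemma monotoneOn_f : MonotoneOn f (Ioo (-1) 1) := by
  rintro s ⟨hs₁, hs₂⟩ t ⟨ht₁, ht₂⟩ hst
  have hs' : 0 < 1 - |s| := sub_pos.2 (abs_lt.2 ⟨hs₁, hs₂⟩)
  have ht' : 0 < 1 - |t| := sub_pos.2 (abs_lt.2 ⟨ht₁, ht₂⟩)
  rw [f, f, div_le_div_iff₀ hs' ht']
  rcases abs_cases s with ⟨h₁, h₂⟩ | ⟨h₁, h₂⟩ <;>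
    rcases abs_cases t with ⟨h₃, h₄⟩ | ⟨h₃, h₄⟩ <;> nlinarith

lemma continuousOn_f : ContinuousOn f (Ioo (-1) 1) := by
  refine continuousOn_id.div (by fun_prop) fun t ht => ?_
  rw [sub_ne_zero, ne_comm]
  exact (abs_lt.2 ht).ne

lemma dI_add_dI_of_mem_uIcc {a b c : ℝ} (ha : a ∈ Ioo (-1) 1) (hc : c ∈ Ioo (-1) 1)
    (hb : b ∈ uIcc a c) : dI a b + dI b c = dI a c := by
  have hfb : f b ∈ segment ℝ (f a) (f c) := by
    rw [segment_eq_uIcc]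
    exact (monotoneOn_f.mono (ordConnected_Ioo.uIcc_subset ha hc)).mapsTo_uIcc hb
  -- `dI s t` is `dist (f s) (f t)` by definition of the metric on `ℝ`.
  exact dist_add_dist_of_mem_segment hfb

lemma inner_mem_uIcc_of_mem_segment {E : Type*} [NormedAddCommGroup E] [InnerProductSpace ℝ E]
    {x y z : E} (h : y ∈ segment ℝ x z) (v : E) :
    (inner ℝ y v : ℝ) ∈ uIcc (inner ℝ x v) (inner ℝ z v) := by
  have := mem_image_of_mem (innerSL ℝ v).toLinearMap.toAffineMap h
  rw [image_segment] at this
  simpa only [← segment_eq_uIcc, LinearMap.coe_toAffineMap, ContinuousLinearMap.coe_coe,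
    innerSL_apply_apply, real_inner_comm v] using this

lemma norm_u (θ : ℝ) : ‖u θ‖ = 1 := by
  simp [u, EuclideanSpace.norm_eq, Fin.sum_univ_two]

lemma continuous_u : Continuous u := by
  unfold u
  fun_prop

lemma inner_u_mem_Ioo {x : EuclideanSpace ℝ (Fin 2)} (hx : ‖x‖ < 1) (θ : ℝ) :
    (inner ℝ x (u θ) : ℝ) ∈ Ioo (-1) 1 := by
  refine abs_lt.1 ?_
  calc |(inner ℝ x (u θ) : ℝ)| ≤ ‖x‖ * ‖u θ‖ := abs_real_inner_le_norm x (u θ)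
    _ = ‖x‖ := by rw [norm_u, mul_one]
    _ < 1 := hx

lemma continuous_dI_inner_u {x y : EuclideanSpace ℝ (Fin 2)} (hx : ‖x‖ < 1) (hy : ‖y‖ < 1) :
    Continuous fun θ => dI (inner ℝ x (u θ)) (inner ℝ y (u θ)) := by
  have hf {w : EuclideanSpace ℝ (Fin 2)} (hw : ‖w‖ < 1) : Continuous fun θ => f (inner ℝ w (u θ)) :=
    continuousOn_f.comp_continuous (continuous_const.inner continuous_u) (inner_u_mem_Ioo hw)
  exact ((hf hx).sub (hf hy)).abs

theorem Dmet_additive_on_segment (x y z : EuclideanSpace ℝ (Fin 2))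
    (hx : ‖x‖ < 1) (hy : ‖y‖ < 1) (hz : ‖z‖ < 1)
    (hseg : ∃ lam ∈ Icc (0:ℝ) 1, y = (1 - lam) • x + lam • z) :
    Dmet x z = Dmet x y + Dmet y z := by
  obtain ⟨lam, hlam, rfl⟩ := hseg
  have hmem : (1 - lam) • x + lam • z ∈ segment ℝ x z := by
    rw [segment_eq_image]
    exact ⟨lam, hlam, rfl⟩
  rw [Dmet, Dmet, Dmet, ← intervalIntegral.integral_add
    ((continuous_dI_inner_u hx hy).intervalIntegrable _ _)
    ((continuous_dI_inner_u hy hz).intervalIntegrable _ _)]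
  exact intervalIntegral.integral_congr fun θ _ => (dI_add_dI_of_mem_uIcc (inner_u_mem_Ioo hx θ)
    (inner_u_mem_Ioo hz θ) (inner_mem_uIcc_of_mem_segment hmem (u θ))).symm
end

section
/- For every ξ on the unit circle, the integral ∫₀^π d_I(0, ⟨ξ, u_θ⟩) dθ = ∫₀^π [1/(1-|cos(θ - θ_ξ)|) - 1] dθ diverges, where θ_ξ is the angle of ξ. Consequently, every Euclidean radius of the unit disk has infinite length in the metric D. -/
open Real MeasureTheory Set

/-! Near a point `c ∈ [0, π)` with `|cos (c - θξ)| = 1`, both integrands equal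
`cos (θ - c) / (1 - cos (θ - c))`, which is of order `2 / (θ - c)²` since `1 - cos y ≤ y² / 2`;
in particular it dominates `1 / |θ - c|`, which is not integrable at `c`. -/

open Filter Topology Asymptotics

lemma inner_u (a b : ℝ) : (inner ℝ (u a) (u b) : ℝ) = cos (b - a) := by
  simp [u, PiLp.inner_apply, Fin.sum_univ_two, cos_sub]

lemma dI_zero_left {t : ℝ} (ht : |t| ≤ 1) : dI 0 t = |t| / (1 - |t|) := by
  rw [dI, f, f, abs_zero, zero_div, zero_sub, abs_neg, abs_div, abs_of_nonneg (sub_nonneg.2 ht)]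

lemma cos_mem_Ioo_of_abs_le_one {y : ℝ} (hy0 : y ≠ 0) (hy : |y| ≤ 1) : cos y ∈ Ioo 0 1 := by
  have hyπ : |y| ≤ π := hy.trans (by linarith [pi_gt_three])
  have hlt : cos y < 1 := by
    have := cos_le_one_sub_mul_cos_sq hyπ
    have : 0 < 2 / π ^ 2 * y ^ 2 := by positivity
    linarith
  have hpos : 0 < cos y := by
    have := one_sub_sq_div_two_le_cos (x := y)
    nlinarith [sq_abs y, abs_nonneg y]
  exact ⟨hpos, hlt⟩

lemma inv_abs_le_cos_div_one_sub_cos {y : ℝ} (hy0 : y ≠ 0) (hy : |y| ≤ 1) :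
    |y|⁻¹ ≤ cos y / (1 - cos y) := by
  have hlt := (cos_mem_Ioo_of_abs_le_one hy0 hy).2
  have hy' : 0 < |y| := abs_pos.2 hy0
  have hlb : 1 - y ^ 2 / 2 ≤ cos y := one_sub_sq_div_two_le_cos
  rw [inv_eq_one_div, div_le_div_iff₀ hy' (by linarith)]
  nlinarith [sq_abs y]

lemma eventually_nhdsNE_sub_ne_zero_and_abs_sub_le_one (c : ℝ) :
    ∀ᶠ x in 𝓝[≠] c, x - c ≠ 0 ∧ |x - c| ≤ 1 := by
  filter_upwards [nhdsWithin_le_nhds (Metric.closedBall_mem_nhds c one_pos), self_mem_nhdsWithin]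
    with x hx hxc
  exact ⟨sub_ne_zero.2 hxc, hx⟩

lemma eventually_nhdsNE_cos_sub_mem_Ioo (c : ℝ) : ∀ᶠ x in 𝓝[≠] c, cos (x - c) ∈ Ioo 0 1 :=
  (eventually_nhdsNE_sub_ne_zero_and_abs_sub_le_one c).mono fun _ h =>
    cos_mem_Ioo_of_abs_le_one h.1 h.2

lemma isBigO_sub_inv_cos_sub_div (c : ℝ) :
    (fun x => (x - c)⁻¹) =O[𝓝[≠] c] fun x => cos (x - c) / (1 - cos (x - c)) := by
  refine IsBigO.of_bound 1 ?_
  filter_upwards [eventually_nhdsNE_sub_ne_zero_and_abs_sub_le_one c] with x ⟨hx0, hx1⟩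
  obtain ⟨hpos, hlt⟩ := cos_mem_Ioo_of_abs_le_one hx0 hx1
  rw [one_mul, norm_inv, norm_eq_abs, norm_eq_abs, abs_of_pos (div_pos hpos (by linarith))]
  exact inv_abs_le_cos_div_one_sub_cos hx0 hx1

lemma not_intervalIntegrable_of_eventuallyEq_cos_sub_div {F : ℝ → ℝ} {a b c : ℝ} (hab : a ≠ b)
    (hc : c ∈ uIcc a b) (hF : F =ᶠ[𝓝[≠] c] fun x => cos (x - c) / (1 - cos (x - c))) :
    ¬ IntervalIntegrable F volume a b :=
  not_intervalIntegrable_of_sub_inv_isBigO_punctured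
    ((isBigO_sub_inv_cos_sub_div c).trans_eventuallyEq hF.symm) hab hc

lemma Function.Antiperiodic.periodic_abs {α β : Type*} [Add α] [AddGroup β] [Lattice β]
    {g : α → β} {c : α} (h : Function.Antiperiodic g c) : Function.Periodic (fun x => |g x|) c :=
  fun x => by simp only [h x, abs_neg]

lemma exists_mem_Ico_abs_cos_sub_eq (θ : ℝ) :
    ∃ c ∈ Ico 0 π, ∀ x, |cos (x - θ)| = |cos (x - c)| := by
  refine ⟨toIcoMod pi_pos 0 θ, toIcoMod_mem_Ico' pi_pos θ, fun x => ?_⟩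
  have hθ : x - θ = x - toIcoMod pi_pos 0 θ - toIcoDiv pi_pos 0 θ * π := by
    rw [← self_sub_toIcoMod_eq_mul]; ring
  rw [hθ]
  exact cos_antiperiodic.periodic_abs.sub_int_mul_eq _

theorem radius_has_infinite_length (θξ : ℝ) :
    ¬ IntervalIntegrable (fun θ => dI 0 (inner ℝ (u θξ) (u θ) : ℝ)) volume 0 π ∧
    ¬ IntervalIntegrable (fun θ => 1 / (1 - |Real.cos (θ - θξ)|) - 1) volume 0 π := by
  obtain ⟨c, hc, hcos⟩ := exists_mem_Ico_abs_cos_sub_eq θξ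
  have hc' : c ∈ uIcc 0 π := by rw [uIcc_of_le pi_pos.le]; exact Ico_subset_Icc_self hc
  have hnear : ∀ᶠ x in 𝓝[≠] c, |cos (x - θξ)| = cos (x - c) ∧ cos (x - c) < 1 := by
    filter_upwards [eventually_nhdsNE_cos_sub_mem_Ioo c] with x ⟨hpos, hlt⟩
    exact ⟨(hcos x).trans (abs_of_pos hpos), hlt⟩
  constructor
  · refine not_intervalIntegrable_of_eventuallyEq_cos_sub_div pi_pos.ne hc' ?_
    filter_upwards [hnear] with x ⟨habs, _⟩
    rw [inner_u, dI_zero_left (abs_cos_le_one _), habs]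
  · refine not_intervalIntegrable_of_eventuallyEq_cos_sub_div pi_pos.ne hc' ?_
    filter_upwards [hnear] with x ⟨habs, hlt⟩
    rw [habs]
    field_simp [(sub_pos.2 hlt).ne']
    ring
end
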